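/- For n ≥ 1, the graph Γ_CCC(Sym(n)) is a cograph if and only if n ≤ 4. -/

import Mathlib

/-- The set of conjugacy classes of non-central elements of `G`. -/
def NCClass (G : Type*) [Group G] : Type _ :=
  {c : ConjClasses G // ∃ x : G, ConjClasses.mk x = c ∧ x ∉ Subgroup.center G}

/-- The conjugacy class graph associated to a property `P` of subgroups:
two distinct non-central conjugacy classes are adjacent iff they have
representatives `a`, `b` with `P ⟨a, b⟩`. -/
def classGraph (G : Type*) [Group G] (P : Subgroup G → Prop) :
    SimpleGraph (NCClass G) where
  Adj c d := c ≠ d ∧ ∃ a b : G, ConjClasses.mk a = c.1 ∧ ConjClasses.mk b = d.1 ∧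
    P (Subgroup.closure {a, b})
  symm := by
    constructor
    rintro c d ⟨hne, a, b, ha, hb, hP⟩
    refine ⟨hne.symm, b, a, hb, ha, ?_⟩
    rwa [Set.pair_comm]
  loopless := ⟨by rintro c ⟨hne, -⟩; exact hne rfl⟩

/-- The commuting conjugacy class graph `Γ_CCC(G)`. -/
def cccGraph (G : Type*) [Group G] : SimpleGraph (NCClass G) :=
  classGraph G (fun H => ∀ x ∈ H, ∀ y ∈ H, x * y = y * x)

/-- The nilpotent conjugacy class graph `Γ_NCC(G)`. -/
def nccGraph (G : Type*) [Group G] : SimpleGraph (NCClass G) :=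
  classGraph G (fun H => Group.IsNilpotent H)

/-- The solvable conjugacy class graph `Γ_SCC(G)`. -/
def sccGraph (G : Type*) [Group G] : SimpleGraph (NCClass G) :=
  classGraph G (fun H => IsSolvable H)

/-- A graph contains an induced path `P₄` on four vertices. -/
def HasInducedP4 {V : Type*} (Γ : SimpleGraph V) : Prop :=
  ∃ a b c d : V, a ≠ b ∧ a ≠ c ∧ a ≠ d ∧ b ≠ c ∧ b ≠ d ∧ c ≠ d ∧
    Γ.Adj a b ∧ Γ.Adj b c ∧ Γ.Adj c d ∧ ¬Γ.Adj a c ∧ ¬Γ.Adj a d ∧ ¬Γ.Adj b d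

/-- A graph is a cograph iff it has no induced `P₄`. -/
def IsCograph {V : Type*} (Γ : SimpleGraph V) : Prop := ¬ HasInducedP4 Γ

/-- A graph contains an induced cycle `Cₙ`. -/
def HasInducedCycle {V : Type*} (Γ : SimpleGraph V) (n : ℕ) : Prop :=
  ∃ f : ZMod n → V, Function.Injective f ∧
    ∀ i j : ZMod n, Γ.Adj (f i) (f j) ↔ (j = i + 1 ∨ i = j + 1)

/-- A graph is chordal iff it has no induced cycle `Cₙ` for `n ≥ 4`. -/
def IsChordal {V : Type*} (Γ : SimpleGraph V) : Prop :=
  ∀ n : ℕ, 4 ≤ n → ¬ HasInducedCycle Γ n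

/-- A graph contains an induced `2K₂`. -/
def Has2K2 {V : Type*} (Γ : SimpleGraph V) : Prop :=
  ∃ a b c d : V, a ≠ b ∧ a ≠ c ∧ a ≠ d ∧ b ≠ c ∧ b ≠ d ∧ c ≠ d ∧
    Γ.Adj a b ∧ Γ.Adj c d ∧ ¬Γ.Adj a c ∧ ¬Γ.Adj a d ∧ ¬Γ.Adj b c ∧ ¬Γ.Adj b d

/-- A graph contains an induced claw `K_{1,3}`: a vertex with three pairwise
non-adjacent neighbours. -/
def HasClaw {V : Type*} (Γ : SimpleGraph V) : Prop :=
  ∃ v a b c : V, a ≠ b ∧ a ≠ c ∧ b ≠ c ∧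
    Γ.Adj v a ∧ Γ.Adj v b ∧ Γ.Adj v c ∧ ¬Γ.Adj a b ∧ ¬Γ.Adj a c ∧ ¬Γ.Adj b c

/-- A graph is claw-free iff it has no induced `K_{1,3}`. -/
def IsClawFree {V : Type*} (Γ : SimpleGraph V) : Prop := ¬ HasClaw Γ

/-- A graph is split iff it has no induced `C₄`, `C₅` or `2K₂`. -/
def IsSplit {V : Type*} (Γ : SimpleGraph V) : Prop :=
  ¬ HasInducedCycle Γ 4 ∧ ¬ HasInducedCycle Γ 5 ∧ ¬ Has2K2 Γ

/-- A graph is threshold iff it has no induced `P₄`, `C₄`, `C₅` or `2K₂`. -/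
def IsThreshold {V : Type*} (Γ : SimpleGraph V) : Prop :=
  ¬ HasInducedP4 Γ ∧ ¬ HasInducedCycle Γ 4 ∧ ¬ HasInducedCycle Γ 5 ∧ ¬ Has2K2 Γ

/-- An EPPO group: every non-identity element has prime power order. -/
def IsEPPO (G : Type*) [Group G] : Prop :=
  ∀ g : G, g ≠ 1 → IsPrimePow (orderOf g)


/-!
For `n ≤ 4` the graph has no induced `P₄` for trivial reasons: for `n ≤ 3` commuting
non-central elements of `Sym(n)` are conjugate, so there are no edges at all, and for `n = 4`
every edge contains the class of `(0 1)(2 3)`, so the graph is a star.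

For `n ≥ 5` one exhibits an induced path `a – b – c – d`. For `n = 5` this is a finite check.
For `n = m + 6` take `a = (0 1 ⋯ m+3)`, `b = (m+4 m+5)`, `c = (0 1 2)` and
`d = (0 1 2)(3 4 ⋯ m+5)`. Anything commuting with `a` or with `b` preserves the pair
`{m+4, m+5}`, so its square has a fixed point; but `d²` is fixed-point free, and so is every
conjugate of it. A `3`-cycle commuting with `a` must fix that pair pointwise (it has odd order),
hence move a point of the `(m+4)`-cycle `a`, hence move all of its support: too many points.
-/

open Equiv Equiv.Perm Finset

theorem not_hasInducedP4_of_forall_adj_eq_or_eq {V : Type*} {Γ : SimpleGraph V} (v : V)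
    (h : ∀ x y, Γ.Adj x y → x = v ∨ y = v) : ¬HasInducedP4 Γ := by
  rintro ⟨a, b, c, d, -, hac, had, hbc, hbd, -, hab, -, hcd, -⟩
  rcases h a b hab with rfl | rfl <;> rcases h c d hcd with rfl | rfl <;> contradiction

namespace NCClass

variable {G : Type*} [Group G]

def mk (x : G) (hx : x ∉ Subgroup.center G) : NCClass G :=
  ⟨ConjClasses.mk x, x, rfl, hx⟩

theorem mk_eq_mk_iff {x y : G} {hx : x ∉ Subgroup.center G} {hy : y ∉ Subgroup.center G} :
    mk x hx = mk y hy ↔ IsConj x y :=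
  Subtype.ext_iff.trans ConjClasses.mk_eq_mk_iff_isConj

theorem notMem_center_of_mk_eq {x : G} {v : NCClass G} (h : ConjClasses.mk x = v.1) :
    x ∉ Subgroup.center G := by
  obtain ⟨y, hy, hyc⟩ := v.2
  intro hx
  rw [← hy, ConjClasses.mk_eq_mk_iff_isConj] at h
  exact hyc (h.symm.eq_of_right_mem_center hx ▸ hx)

end NCClass

section cccGraph

variable {G : Type*} [Group G]

theorem cccGraph_adj_iff {u v : NCClass G} :
    (cccGraph G).Adj u v ↔ u ≠ v ∧ ∃ a b : G, ConjClasses.mk a = u.1 ∧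
      ConjClasses.mk b = v.1 ∧ Commute a b := by
  refine and_congr_right fun _ => exists₂_congr fun a b => and_congr_right fun _ =>
    and_congr_right fun _ => ⟨fun h => h a (Subgroup.subset_closure (by simp)) b
      (Subgroup.subset_closure (by simp)), fun hab x hx y hy => ?_⟩
  have hpair : ∀ x ∈ ({a, b} : Set G), ∀ y ∈ ({a, b} : Set G), x * y = y * x := by
    simp only [Set.mem_insert_iff, Set.mem_singleton_iff]
    rintro x (rfl | rfl) y (rfl | rfl)
    exacts [rfl, hab, hab.symm, rfl]
  exact Set.centralizer_centralizer_comm_of_comm hpair x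
    (Subgroup.closure_le_centralizer_centralizer _ hx) y
    (Subgroup.closure_le_centralizer_centralizer _ hy)

theorem cccGraph_adj_mk_iff {x y : G} {hx : x ∉ Subgroup.center G}
    {hy : y ∉ Subgroup.center G} :
    (cccGraph G).Adj (.mk x hx) (.mk y hy) ↔ ¬IsConj x y ∧ ∃ y', IsConj y y' ∧ Commute x y' := by
  rw [cccGraph_adj_iff, Ne, NCClass.mk_eq_mk_iff]
  refine and_congr_right fun _ => ⟨?_, fun ⟨y', hyy', hxy'⟩ =>
    ⟨x, y', rfl, ConjClasses.mk_eq_mk_iff_isConj.mpr hyy'.symm, hxy'⟩⟩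
  rintro ⟨a, b, ha, hb, hab⟩
  obtain ⟨g, rfl⟩ := isConj_iff.mp (ConjClasses.mk_eq_mk_iff_isConj.mp ha)
  refine ⟨g * b * g⁻¹, ?_, hab.map (MulAut.conj g)⟩
  exact (ConjClasses.mk_eq_mk_iff_isConj.mp hb).symm.trans (isConj_iff.mpr ⟨g, rfl⟩)

theorem exists_eq_mk_of_cccGraph_adj {u v : NCClass G} (huv : (cccGraph G).Adj u v) :
    ∃ a b : G, ∃ (ha : a ∉ Subgroup.center G) (hb : b ∉ Subgroup.center G),
      u = .mk a ha ∧ v = .mk b hb ∧ Commute a b ∧ ¬IsConj a b := by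
  obtain ⟨huv, a, b, ha, hb, hab⟩ := cccGraph_adj_iff.mp huv
  refine ⟨a, b, NCClass.notMem_center_of_mk_eq ha, NCClass.notMem_center_of_mk_eq hb,
    Subtype.ext ha.symm, Subtype.ext hb.symm, hab, fun h => huv (Subtype.ext ?_)⟩
  exact ha.symm.trans ((ConjClasses.mk_eq_mk_iff_isConj.mpr h).trans hb)

theorem not_cccGraph_adj_of_forall_commute_isConj
    (h : ∀ a b : G, a ∉ Subgroup.center G → b ∉ Subgroup.center G → Commute a b → IsConj a b)
    (u v : NCClass G) : ¬(cccGraph G).Adj u v := fun huv => by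
  obtain ⟨a, b, ha, hb, -, -, hab, hn⟩ := exists_eq_mk_of_cccGraph_adj huv
  exact hn (h a b ha hb hab)

theorem eq_mk_or_eq_mk_of_cccGraph_adj (r : G) (hr : r ∉ Subgroup.center G)
    (h : ∀ a b : G, a ∉ Subgroup.center G → b ∉ Subgroup.center G → Commute a b →
      ¬IsConj a b → IsConj a r ∨ IsConj b r)
    {u v : NCClass G} (huv : (cccGraph G).Adj u v) : u = .mk r hr ∨ v = .mk r hr := by
  obtain ⟨a, b, ha, hb, rfl, rfl, hab, hn⟩ := exists_eq_mk_of_cccGraph_adj huv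
  exact (h a b ha hb hab hn).imp NCClass.mk_eq_mk_iff.mpr NCClass.mk_eq_mk_iff.mpr

theorem hasInducedP4_cccGraph_of_commute {a b c d : G} (hab : Commute a b) (hbc : Commute b c)
    (hcd : Commute c d) (nab : ¬IsConj a b) (nbc : ¬IsConj b c) (ncd : ¬IsConj c d)
    (hac : ∀ c', IsConj c c' → ¬Commute a c') (had : ∀ d', IsConj d d' → ¬Commute a d')
    (hbd : ∀ d', IsConj d d' → ¬Commute b d') : HasInducedP4 (cccGraph G) := by
  have notMem_left {x y : G} (h : ∀ y', IsConj y y' → ¬Commute x y') :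
      x ∉ Subgroup.center G :=
    fun hx => h y (IsConj.refl _) (Subgroup.mem_center_iff.mp hx y).symm
  have notMem_right {x y : G} (h : ∀ y', IsConj y y' → ¬Commute x y') :
      y ∉ Subgroup.center G :=
    fun hy => h y (IsConj.refl _) (Subgroup.mem_center_iff.mp hy x)
  have not_isConj {x y : G} (h : ∀ y', IsConj y y' → ¬Commute x y') : ¬IsConj x y :=
    fun hxy => h x hxy.symm (Commute.refl x)
  have adj {x y : G} {hx : x ∉ Subgroup.center G} {hy : y ∉ Subgroup.center G}
      (hxy : Commute x y) (nxy : ¬IsConj x y) : (cccGraph G).Adj (.mk x hx) (.mk y hy) :=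
    cccGraph_adj_mk_iff.mpr ⟨nxy, y, IsConj.refl _, hxy⟩
  have not_adj {x y : G} {hx : x ∉ Subgroup.center G} {hy : y ∉ Subgroup.center G}
      (h : ∀ y', IsConj y y' → ¬Commute x y') : ¬(cccGraph G).Adj (.mk x hx) (.mk y hy) :=
    fun hxy => by
      obtain ⟨-, y', hyy', hxy'⟩ := cccGraph_adj_mk_iff.mp hxy
      exact h y' hyy' hxy'
  have ne {x y : G} {hx : x ∉ Subgroup.center G} {hy : y ∉ Subgroup.center G}
      (h : ¬IsConj x y) : NCClass.mk x hx ≠ .mk y hy := mt NCClass.mk_eq_mk_iff.mp h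
  exact ⟨.mk a (notMem_left hac), .mk b (notMem_left hbd), .mk c (notMem_right hac),
    .mk d (notMem_right had), ne nab, ne (not_isConj hac), ne (not_isConj had), ne nbc,
    ne (not_isConj hbd), ne ncd, adj hab nab, adj hbc nbc, adj hcd ncd,
    not_adj hac, not_adj had, not_adj hbd⟩

end cccGraph

theorem Fin.cycleRange_apply_eq_self_iff {n : ℕ} {i x : Fin (n + 1)} (hi : i ≠ 0) :
    i.cycleRange x = x ↔ i < x := by
  rcases lt_or_ge i x with h | h
  · simp [Fin.cycleRange_of_gt h, h]
  rw [Fin.cycleRange_of_le h, iff_false_intro (not_lt.mpr h), iff_false]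
  split_ifs with hx
  · exact fun h0 => hi (hx ▸ h0.symm)
  · have hlt : x < Fin.last n := lt_of_lt_of_le (lt_of_le_of_ne h hx) (Fin.le_last _)
    rw [Fin.ext_iff, Fin.val_add_one_of_lt hlt]
    omega

theorem Fin.cycleIcc_last_apply_eq_self_iff {n : ℕ} {i x : Fin (n + 1)} (hi : i < Fin.last n) :
    cycleIcc i (Fin.last n) x = x ↔ x < i := by
  rcases lt_or_ge x i with h | h
  · exact iff_of_true (Fin.cycleIcc_of_lt h) h
  rw [Fin.cycleIcc_of_le_of_le h (Fin.le_last x), iff_false_intro (not_lt.mpr h), iff_false]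
  split_ifs with hx
  · exact fun h0 => hi.ne (hx ▸ h0)
  · rw [Fin.ext_iff, Fin.val_add_one_of_lt (lt_of_le_of_ne (Fin.le_last x) hx)]
    omega

namespace Equiv.Perm

variable {α : Type*} {f g σ : Perm α} {p q x : α}

theorem exists_apply_eq_self_of_isConj (h : IsConj f g) (hx : g x = x) : ∃ y, f y = y := by
  obtain ⟨c, rfl⟩ := isConj_iff.mp h
  refine ⟨c⁻¹ x, c.injective ?_⟩
  simpa [mul_apply] using hx

theorem sq_apply_eq_self_of_mapsTo_pair (h : Set.MapsTo f {p, q} {p, q}) : (f ^ 2) p = p := by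
  rw [sq, mul_apply]
  rcases h (Set.mem_insert p _) with hp | hp
  · rw [hp, hp]
  rcases h (Set.mem_insert_of_mem p rfl) with hq | hq
  · rw [hp, hq]
  · rw [Set.mem_singleton_iff] at hp hq
    rw [f.injective (hp.trans hq.symm), hq, hq]

variable [DecidableEq α] [Fintype α]

theorem card_support_eq_of_isConj (h : IsConj f g) : #f.support = #g.support := by
  rw [← sum_cycleType, ← sum_cycleType, isConj_iff_cycleType_eq.mp h]

theorem IsCycle.pow_apply_ne_self (hσ : σ.IsCycle) (hx : σ x ≠ x) {k : ℕ} (hk : 0 < k)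
    (hk' : k < #σ.support) : (σ ^ k) x ≠ x := by
  rw [← mem_support, hσ.support_pow_of_pos_of_lt_orderOf hk (hσ.orderOf ▸ hk'), mem_support]
  exact hx

theorem IsCycle.support_subset_support_of_commute (hσ : σ.IsCycle) (h : Commute f σ)
    (hσx : σ x ≠ x) (hfx : f x ≠ x) : σ.support ⊆ f.support := by
  intro y hy
  obtain ⟨i, rfl⟩ := hσ.sameCycle hσx (mem_support.mp hy)
  rw [mem_support, ← mul_apply, (h.zpow_right i).eq, mul_apply]
  exact fun h' => hfx ((σ ^ i).injective h')

theorem sq_apply_eq_self_of_commute_of_support_eq (h : Commute f g) (hg : g.support = {p, q}) :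
    (f ^ 2) p = p := by
  refine sq_apply_eq_self_of_mapsTo_pair (q := q) ?_
  rw [← coe_pair, ← hg]
  exact fun x hx => (mem_support_iff_of_commute h x).mpr hx

theorem sq_apply_eq_self_of_commute_of_compl_support_eq (h : Commute f g)
    (hg : g.supportᶜ = {p, q}) : (f ^ 2) p = p := by
  refine sq_apply_eq_self_of_mapsTo_pair (q := q) ?_
  rw [← coe_pair, ← hg, coe_compl]
  exact fun x hx => mt (mem_support_iff_of_commute h x).mp hx

theorem IsThreeCycle.not_commute_of_isCycle (hf : f.IsThreeCycle) (hσ : σ.IsCycle)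
    (hσ4 : 3 < #σ.support) (hfix : σ.supportᶜ = {p, q}) : ¬Commute f σ := by
  intro h
  have hf3 : f ^ 3 = 1 := hf.orderOf ▸ pow_orderOf_eq_one f
  -- `f` permutes the two fixed points of `σ`, and having odd order it must fix them.
  have hfix' : ∀ y, y ∉ σ.support → f y = y := by
    intro y hy
    have hsq : (f ^ 2) y = y := by
      rw [← mem_compl, hfix, mem_insert, mem_singleton] at hy
      rcases hy with rfl | rfl
      · exact sq_apply_eq_self_of_commute_of_compl_support_eq h hfix
      · exact sq_apply_eq_self_of_commute_of_compl_support_eq h (hfix.trans (pair_comm _ _))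
    calc f y = f ((f ^ 2) y) := by rw [hsq]
      _ = (f ^ 3) y := by rw [← mul_apply, ← pow_succ']
      _ = y := by rw [hf3, one_apply]
  obtain ⟨x, hx⟩ := hf.isCycle.nonempty_support
  have hσx : σ x ≠ x := fun hσx => mem_support.mp hx (hfix' x (notMem_support.mpr hσx))
  have := card_le_card (hσ.support_subset_support_of_commute h hσx (mem_support.mp hx))
  rw [hf.card_support] at this
  omega

end Equiv.Perm

namespace InducedP4Witness

variable (m : ℕ)

def cycA : Perm (Fin (m + 6)) := Fin.cycleRange ⟨m + 3, by omega⟩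
def swapB : Perm (Fin (m + 6)) := swap ⟨m + 4, by omega⟩ (Fin.last (m + 5))
def cycC : Perm (Fin (m + 6)) := Fin.cycleRange ⟨2, by omega⟩
def cycE : Perm (Fin (m + 6)) := Fin.cycleIcc ⟨3, by omega⟩ (Fin.last (m + 5))

variable {m}

theorem cycA_apply_eq_self_iff (x : Fin (m + 6)) : cycA m x = x ↔ m + 3 < x.val :=
  Fin.cycleRange_apply_eq_self_iff (Fin.ne_of_val_ne (by simp))

theorem cycC_apply_eq_self_iff (x : Fin (m + 6)) : cycC m x = x ↔ 2 < x.val :=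
  Fin.cycleRange_apply_eq_self_iff (Fin.ne_of_val_ne (by simp))

theorem cycE_apply_eq_self_iff (x : Fin (m + 6)) : cycE m x = x ↔ x.val < 3 :=
  Fin.cycleIcc_last_apply_eq_self_iff (Fin.lt_def.mpr (by simp))

theorem isCycle_cycA : (cycA m).IsCycle := Fin.isCycle_cycleRange (Fin.ne_of_val_ne (by simp))

theorem card_support_cycA : #(cycA m).support = m + 4 := by
  rw [← sum_cycleType, cycA, Fin.cycleType_cycleRange (Fin.ne_of_val_ne (by simp))]
  simp

theorem isThreeCycle_cycC : (cycC m).IsThreeCycle := Fin.isThreeCycle_cycleRange_two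

theorem isCycle_cycE : (cycE m).IsCycle := Fin.isCycle_cycleIcc (Fin.lt_def.mpr (by simp))

theorem card_support_cycE : #(cycE m).support = m + 3 := by
  rw [← sum_cycleType, cycE, Fin.cycleType_cycleIcc_of_lt (Fin.lt_def.mpr (by simp))]
  simp

theorem support_swapB : (swapB m).support = {⟨m + 4, by omega⟩, Fin.last (m + 5)} :=
  support_swap (Fin.ne_of_val_ne (by simp))

theorem card_support_swapB : #(swapB m).support = 2 :=
  card_support_swap (Fin.ne_of_val_ne (by simp))

theorem compl_support_cycA : (cycA m).supportᶜ = {⟨m + 4, by omega⟩, Fin.last (m + 5)} := by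
  ext x
  rw [mem_compl, notMem_support, cycA_apply_eq_self_iff, mem_insert, mem_singleton,
    Fin.ext_iff, Fin.ext_iff, Fin.val_last]
  dsimp only
  omega

theorem disjoint_cycA_swapB : (cycA m).Disjoint (swapB m) := by
  rw [disjoint_iff_disjoint_support, ← subset_compl_iff_disjoint_left, compl_support_cycA,
    support_swapB]

theorem disjoint_cycC_swapB : (cycC m).Disjoint (swapB m) := by
  rw [disjoint_iff_disjoint_support, ← subset_compl_iff_disjoint_left, support_swapB]
  intro x hx
  rw [mem_insert, mem_singleton] at hx
  rw [mem_compl, notMem_support, cycC_apply_eq_self_iff]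
  rcases hx with rfl | rfl <;> simp

theorem disjoint_cycC_cycE : (cycC m).Disjoint (cycE m) := fun x => by
  rw [cycC_apply_eq_self_iff, cycE_apply_eq_self_iff]
  omega

theorem card_support_cycC_mul_cycE : #(cycC m * cycE m).support = m + 6 := by
  rw [disjoint_cycC_cycE.card_support_mul, isThreeCycle_cycC.card_support, card_support_cycE]
  omega

theorem sq_cycC_mul_cycE_apply_ne_self (x : Fin (m + 6)) : ((cycC m * cycE m) ^ 2) x ≠ x := by
  rw [Ne, disjoint_cycC_cycE.commute.mul_pow,
    (disjoint_cycC_cycE.pow_disjoint_pow 2 2).mul_apply_eq_iff, not_and_or]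
  by_cases hx : x.val < 3
  · refine .inl (isThreeCycle_cycC.isCycle.pow_apply_ne_self ?_ two_pos ?_)
    · rw [Ne, cycC_apply_eq_self_iff]; omega
    · rw [isThreeCycle_cycC.card_support]; norm_num
  · refine .inr (isCycle_cycE.pow_apply_ne_self ?_ two_pos ?_)
    · rw [Ne, cycE_apply_eq_self_iff]; omega
    · rw [card_support_cycE]; omega

end InducedP4Witness

theorem isConj_of_commute_perm_of_le_three {n : ℕ} (hn : n ≤ 3) :
    ∀ a b : Perm (Fin n), a ≠ 1 → b ≠ 1 → Commute a b → IsConj a b := by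
  interval_cases n <;> simp only [Commute, SemiconjBy] <;> decide

set_option maxRecDepth 4000 in
theorem isConj_swap_mul_swap_of_commute_perm_four :
    ∀ a b : Perm (Fin 4), a ≠ 1 → b ≠ 1 → Commute a b → ¬IsConj a b →
      IsConj a (swap 0 1 * swap 2 3) ∨ IsConj b (swap 0 1 * swap 2 3) := by
  simp only [Commute, SemiconjBy]
  decide

theorem isCograph_cccGraph_perm_of_le_four {n : ℕ} (hn : n ≤ 4) :
    IsCograph (cccGraph (Perm (Fin n))) := by
  have ne_one {x : Perm (Fin n)} (hx : x ∉ Subgroup.center _) : x ≠ 1 :=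
    fun h => hx (h ▸ Subgroup.one_mem _)
  rcases hn.lt_or_eq with hn | rfl
  · rintro ⟨u, v, -, -, -, -, -, -, -, -, huv, -⟩
    exact not_cccGraph_adj_of_forall_commute_isConj (fun a b ha hb =>
      isConj_of_commute_perm_of_le_three (by omega) a b (ne_one ha) (ne_one hb)) u v huv
  · have hr : swap 0 1 * swap 2 3 ∉ Subgroup.center (Perm (Fin 4)) := fun h =>
      absurd (Subgroup.mem_center_iff.mp h (swap 0 2)) (by decide)
    exact not_hasInducedP4_of_forall_adj_eq_or_eq _ fun u v =>
      eq_mk_or_eq_mk_of_cccGraph_adj _ hr fun a b ha hb =>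
        isConj_swap_mul_swap_of_commute_perm_four a b (ne_one ha) (ne_one hb)

set_option maxRecDepth 10000 in
theorem hasInducedP4_cccGraph_perm_five : HasInducedP4 (cccGraph (Perm (Fin 5))) := by
  apply hasInducedP4_cccGraph_of_commute (a := c[0, 1, 2, 3]) (b := c[0, 2] * c[1, 3])
    (c := c[0, 2]) (d := c[0, 2] * c[1, 3, 4])
  all_goals
    simp only [isConj_iff, not_exists, forall_exists_index, forall_apply_eq_imp_iff, Commute,
      SemiconjBy]
    decide

open InducedP4Witness in
theorem hasInducedP4_cccGraph_perm_of_six_le {n : ℕ} (hn : 6 ≤ n) :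
    HasInducedP4 (cccGraph (Perm (Fin n))) := by
  obtain ⟨m, rfl⟩ := Nat.exists_eq_add_of_le' hn
  have hd_sq : ∀ d', IsConj (cycC m * cycE m) d' → ∀ x, (d' ^ 2) x ≠ x :=
    fun d' h x hx => by
      obtain ⟨y, hy⟩ := exists_apply_eq_self_of_isConj (h.pow 2) hx
      exact sq_cycC_mul_cycE_apply_ne_self y hy
  refine hasInducedP4_cccGraph_of_commute (a := cycA m) (b := swapB m) (c := cycC m)
    (d := cycC m * cycE m) disjoint_cycA_swapB.commute disjoint_cycC_swapB.commute.symm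
    ((Commute.refl _).mul_right disjoint_cycC_cycE.commute) ?_ ?_ ?_ ?_ ?_ ?_
  · exact fun h => absurd (card_support_eq_of_isConj h)
      (by rw [card_support_cycA, card_support_swapB]; omega)
  · exact fun h => absurd (card_support_eq_of_isConj h)
      (by rw [card_support_swapB, isThreeCycle_cycC.card_support]; omega)
  · exact fun h => absurd (card_support_eq_of_isConj h)
      (by rw [isThreeCycle_cycC.card_support, card_support_cycC_mul_cycE]; omega)
  · intro c' hc' h
    exact IsThreeCycle.not_commute_of_isCycle
      ((isConj_iff_cycleType_eq.mp hc').symm.trans isThreeCycle_cycC) isCycle_cycA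
      (by rw [card_support_cycA]; omega) compl_support_cycA h.symm
  · exact fun d' hd' h => hd_sq d' hd' _
      (sq_apply_eq_self_of_commute_of_compl_support_eq h.symm compl_support_cycA)
  · exact fun d' hd' h => hd_sq d' hd' _
      (sq_apply_eq_self_of_commute_of_support_eq h.symm support_swapB)

theorem ccc_sym_cograph_iff_general (n : ℕ) :
    IsCograph (cccGraph (Equiv.Perm (Fin n))) ↔ n ≤ 4 := by
  refine ⟨fun h => ?_, isCograph_cccGraph_perm_of_le_four⟩
  by_contra hn
  rcases (by omega : n = 5 ∨ 6 ≤ n) with rfl | h6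
  · exact h hasInducedP4_cccGraph_perm_five
  · exact h (hasInducedP4_cccGraph_perm_of_six_le h6)

theorem ccc_sym_cograph_iff (n : ℕ) (hn : 1 ≤ n) :
    IsCograph (cccGraph (Equiv.Perm (Fin n))) ↔ n ≤ 4 :=
  ccc_sym_cograph_iff_general n
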